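/- Let N ≥ 1 and define 𝒱 = ((1+i)/2)·[[1_N, −i·1_N], [i·1_N, −1_N]] ∈ Mat_{2N}(ℂ). Then 𝒱 is unitary, 𝒱ᵀ𝒱 = K and 𝒱𝒱ᵀ = −K, and for every unitary W ∈ Mat_{2N}(ℂ) one has: Kᵀ·W̄·K = W if and only if all entries of 𝒱W𝒱* are real. Consequently the map W ↦ 𝒱W𝒱* is a group isomorphism from 𝒰 = { W ∈ Mat_{2N}(ℂ) unitary : Kᵀ·W̄·K = W } onto { O ∈ Mat_{2N}(ℂ) : all entries of O are real and OᵀO = 1 }, i.e. 𝒱𝒰𝒱* = O(2N). -/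

import Mathlib

/-!
Since 𝒱 is unitary with 𝒱ᵀ𝒱 = K, taking adjoints gives 𝒱*𝒱̄ = K*, so 𝒱̄ = 𝒱K*; likewise
conj(𝒱*) = 𝒱ᵀ = K𝒱*. Hence conj(𝒱W𝒱*) = 𝒱(KᵀW̄K)𝒱* (K is real), and as conjugation by 𝒱 is
injective, 𝒱W𝒱* is real exactly when KᵀW̄K = W. Conjugation by 𝒱 also preserves unitarity, and
a real matrix is unitary iff it is orthogonal, which identifies the image of 𝒰 with O(2N).
-/

noncomputable section
open Matrix

/-- The particle-hole symmetry matrix K = [[0, 1_N], [1_N, 0]]. -/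
def Kmat (N : ℕ) : Matrix (Fin N ⊕ Fin N) (Fin N ⊕ Fin N) ℂ :=
  Matrix.fromBlocks 0 1 1 0

/-- The Cayley-type transformation 𝒱 = ((1+i)/2)·[[1, -i·1], [i·1, -1]]. -/
def Vmat (N : ℕ) : Matrix (Fin N ⊕ Fin N) (Fin N ⊕ Fin N) ℂ :=
  ((1 + Complex.I) / 2) •
    Matrix.fromBlocks 1 (-(Complex.I • (1 : Matrix (Fin N) (Fin N) ℂ)))
      (Complex.I • (1 : Matrix (Fin N) (Fin N) ℂ)) (-1)

namespace Unitary

variable {R : Type*} [Monoid R] [StarMul R] {U : R}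

lemma leftInverse_conj (hU : U ∈ unitary R) :
    Function.LeftInverse (fun y => star U * y * U) (fun x => U * x * star U) := fun x => by
  simp only [← mul_assoc, star_mul_self_of_mem hU, one_mul]
  simp only [mul_assoc, star_mul_self_of_mem hU, mul_one]

lemma rightInverse_conj (hU : U ∈ unitary R) :
    Function.RightInverse (fun y => star U * y * U) (fun x => U * x * star U) := fun x => by
  simp only [← mul_assoc, mul_star_self_of_mem hU, one_mul]
  simp only [mul_assoc, mul_star_self_of_mem hU, mul_one]

lemma star_conj_mem_iff (hU : U ∈ unitary R) {x : R} :
    star U * x * U ∈ unitary R ↔ x ∈ unitary R := by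
  refine ⟨fun hx => ?_, fun hx => mul_mem (mul_mem (star_mem hU) hx) hU⟩
  rw [← rightInverse_conj hU x]
  exact mul_mem (mul_mem hU hx) (star_mem hU)

end Unitary

namespace Matrix

variable {m n p R : Type*}

lemma map_star_mul [Fintype n] [CommSemiring R] [StarRing R] (A : Matrix m n R)
    (B : Matrix n p R) : (A * B).map star = A.map star * B.map star :=
  Matrix.map_mul (f := starRingEnd R)

lemma map_star_eq_self_iff_im_eq_zero (M : Matrix m n ℂ) :
    M.map star = M ↔ ∀ i j, (M i j).im = 0 := by
  simp only [← Matrix.ext_iff, map_apply, Complex.star_def, Complex.conj_eq_iff_im]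

lemma conjTranspose_eq_transpose_of_im_eq_zero {M : Matrix m n ℂ}
    (hM : ∀ i j, (M i j).im = 0) : Mᴴ = Mᵀ := by
  ext i j
  exact Complex.conj_eq_iff_im.2 (hM j i)

lemma mem_unitaryGroup_iff_transpose_mul_self_of_im_eq_zero [Fintype n] [DecidableEq n]
    {M : Matrix n n ℂ} (hM : ∀ i j, (M i j).im = 0) :
    M ∈ unitaryGroup n ℂ ↔ Mᵀ * M = 1 := by
  rw [mem_unitaryGroup_iff', star_eq_conjTranspose, conjTranspose_eq_transpose_of_im_eq_zero hM]

lemma map_star_unitary_conj [Fintype n] [DecidableEq n] [CommRing R] [StarRing R]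
    {V : Matrix n n R} (hV : V ∈ unitaryGroup n R) (W : Matrix n n R) :
    (V * W * Vᴴ).map star = V * ((Vᵀ * V)ᴴ * W.map star * (Vᵀ * V)) * Vᴴ := by
  have hVV : V * Vᴴ = 1 := mem_unitaryGroup_iff.1 hV
  have hbar : V.map star = V * (Vᵀ * V)ᴴ := by
    rw [conjTranspose_mul, ← Matrix.mul_assoc, hVV, Matrix.one_mul, transpose_conjTranspose]
  have hbar_conjTranspose : Vᴴ.map star = Vᵀ * V * Vᴴ := by
    rw [Matrix.mul_assoc, hVV, Matrix.mul_one, ← conjTranspose_transpose,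
      conjTranspose_conjTranspose]
  rw [map_star_mul, map_star_mul, hbar, hbar_conjTranspose]
  simp only [Matrix.mul_assoc]

lemma im_unitary_conj_eq_zero_iff [Fintype n] [DecidableEq n] {V : Matrix n n ℂ}
    (hV : V ∈ unitaryGroup n ℂ) (W : Matrix n n ℂ) :
    (∀ i j, ((V * W * Vᴴ) i j).im = 0) ↔ (Vᵀ * V)ᴴ * W.map star * (Vᵀ * V) = W := by
  rw [← map_star_eq_self_iff_im_eq_zero, map_star_unitary_conj hV]
  exact (Unitary.leftInverse_conj hV).injective.eq_iff

end Matrix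

lemma Kmat_transpose (N : ℕ) : (Kmat N)ᵀ = Kmat N := by
  simp [Kmat, fromBlocks_transpose]

lemma Kmat_conjTranspose (N : ℕ) : (Kmat N)ᴴ = Kmat N := by
  simp [Kmat, fromBlocks_conjTranspose]

lemma Vmat_conjTranspose_mul_self (N : ℕ) : (Vmat N)ᴴ * Vmat N = 1 := by
  ext (i|i) (j|j) <;> by_cases h : i = j <;>
    norm_num [Vmat, mul_apply, Fintype.sum_sum_type, one_apply, h, eq_comm (a := j),
      Sum.inl_ne_inr, Sum.inr_ne_inl, Complex.ext_iff]

lemma Vmat_mem_unitaryGroup (N : ℕ) : Vmat N ∈ unitaryGroup (Fin N ⊕ Fin N) ℂ :=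
  mem_unitaryGroup_iff'.2 (Vmat_conjTranspose_mul_self N)

lemma Vmat_transpose_mul_self (N : ℕ) : (Vmat N)ᵀ * Vmat N = Kmat N := by
  ext (i|i) (j|j) <;> by_cases h : i = j <;>
    norm_num [Vmat, Kmat, mul_apply, Fintype.sum_sum_type, one_apply, h, eq_comm (a := j),
      Sum.inl_ne_inr, Sum.inr_ne_inl, Complex.ext_iff]

lemma Vmat_mul_transpose_self (N : ℕ) : Vmat N * (Vmat N)ᵀ = -Kmat N := by
  ext (i|i) (j|j) <;> by_cases h : i = j <;>
    norm_num [Vmat, Kmat, mul_apply, Fintype.sum_sum_type, one_apply, h, eq_comm (a := j),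
      Sum.inl_ne_inr, Sum.inr_ne_inl, Complex.ext_iff]

lemma Kmat_conj_eq_self_iff_im_Vmat_conj_eq_zero (N : ℕ)
    (W : Matrix (Fin N ⊕ Fin N) (Fin N ⊕ Fin N) ℂ) :
    (Kmat N)ᵀ * W.map star * Kmat N = W ↔ ∀ i j, ((Vmat N * W * (Vmat N)ᴴ) i j).im = 0 := by
  rw [im_unitary_conj_eq_zero_iff (Vmat_mem_unitaryGroup N), Vmat_transpose_mul_self,
    Kmat_conjTranspose, Kmat_transpose]

lemma image_Vmat_conj (N : ℕ) :
    (fun W => Vmat N * W * (Vmat N)ᴴ) ''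
        {W | W ∈ unitaryGroup (Fin N ⊕ Fin N) ℂ ∧ (Kmat N)ᵀ * W.map star * Kmat N = W} =
      {O | (∀ i j, (O i j).im = 0) ∧ Oᵀ * O = 1} := by
  have hV := Vmat_mem_unitaryGroup N
  rw [Set.image_eq_preimage_of_inverse (f := fun W => Vmat N * W * (Vmat N)ᴴ)
    (g := fun O => (Vmat N)ᴴ * O * Vmat N) (Unitary.leftInverse_conj hV)
    (Unitary.rightInverse_conj hV)]
  ext O
  have hO : Vmat N * ((Vmat N)ᴴ * O * Vmat N) * (Vmat N)ᴴ = O := Unitary.rightInverse_conj hV O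
  simp only [Set.mem_preimage, Set.mem_ofPred_eq, Kmat_conj_eq_self_iff_im_Vmat_conj_eq_zero, hO]
  rw [← star_eq_conjTranspose, Unitary.star_conj_mem_iff hV, and_comm]
  exact and_congr_right mem_unitaryGroup_iff_transpose_mul_self_of_im_eq_zero

theorem cayley_transform_canonical_group_general (N : ℕ) :
    Vmat N ∈ Matrix.unitaryGroup (Fin N ⊕ Fin N) ℂ ∧
    (Vmat N)ᵀ * Vmat N = Kmat N ∧
    Vmat N * (Vmat N)ᵀ = -(Kmat N) ∧
    (∀ W ∈ Matrix.unitaryGroup (Fin N ⊕ Fin N) ℂ,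
      ((Kmat N)ᵀ * W.map star * Kmat N = W ↔
        ∀ i j, ((Vmat N * W * (Vmat N)ᴴ) i j).im = 0)) ∧
    (fun W => Vmat N * W * (Vmat N)ᴴ) ''
        {W | W ∈ Matrix.unitaryGroup (Fin N ⊕ Fin N) ℂ ∧
          (Kmat N)ᵀ * W.map star * Kmat N = W} =
      {O : Matrix (Fin N ⊕ Fin N) (Fin N ⊕ Fin N) ℂ |
        (∀ i j, (O i j).im = 0) ∧ Oᵀ * O = 1} :=
  ⟨Vmat_mem_unitaryGroup N, Vmat_transpose_mul_self N, Vmat_mul_transpose_self N,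
    fun W _ => Kmat_conj_eq_self_iff_im_Vmat_conj_eq_zero N W, image_Vmat_conj N⟩

/-- 𝒱 is unitary, 𝒱ᵀ𝒱 = K, 𝒱𝒱ᵀ = -K; a unitary W satisfies Kᵀ·W̄·K = W
iff 𝒱W𝒱* has real entries; and W ↦ 𝒱W𝒱* maps the group 𝒰 of canonical transformations
onto O(2N) (the real orthogonal matrices). -/
theorem cayley_transform_canonical_group (N : ℕ) (hN : 1 ≤ N) :
    Vmat N ∈ Matrix.unitaryGroup (Fin N ⊕ Fin N) ℂ ∧
    (Vmat N)ᵀ * Vmat N = Kmat N ∧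
    Vmat N * (Vmat N)ᵀ = -(Kmat N) ∧
    (∀ W ∈ Matrix.unitaryGroup (Fin N ⊕ Fin N) ℂ,
      ((Kmat N)ᵀ * W.map star * Kmat N = W ↔
        ∀ i j, ((Vmat N * W * (Vmat N)ᴴ) i j).im = 0)) ∧
    (fun W => Vmat N * W * (Vmat N)ᴴ) ''
        {W | W ∈ Matrix.unitaryGroup (Fin N ⊕ Fin N) ℂ ∧
          (Kmat N)ᵀ * W.map star * Kmat N = W} =
      {O : Matrix (Fin N ⊕ Fin N) (Fin N ⊕ Fin N) ℂ |
        (∀ i j, (O i j).im = 0) ∧ Oᵀ * O = 1} :=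
  cayley_transform_canonical_group_general N
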